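/- For each s > 0: (i) ∇u_s**(int P) = ⋃_{y ∈ int P} ∂u_s(y) = ℝⁿ. (ii) ⋃_{y ∈ (int P) ∖ A_s} ∂u_s(y) = ℝⁿ, and for every y ∈ (int P) ∖ A_s one has ∂u_s(y) = {∇u_s(y)} and ∇u_s**(y) = ∇u_s(y). -/

import Mathlib

noncomputable section

open Set MeasureTheory Topology Filter
open scoped RealInnerProductSpace Pointwise

/-- Euclidean space ℝⁿ. -/
abbrev E (n : ℕ) := EuclideanSpace ℝ (Fin n)

/-- The affine functions `l_k(y) = ⟨y, v_k⟩ − λ_k` defining the polytope. -/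
def lfun {n d : ℕ} (v : Fin d → E n) (lam : Fin d → ℝ) (k : Fin d) (y : E n) : ℝ :=
  ⟪y, v k⟫ - lam k

/-- The polytope `P = ⋂_k {l_k ≥ 0}`. -/
def Pset {n d : ℕ} (v : Fin d → E n) (lam : Fin d → ℝ) : Set (E n) :=
  {y | ∀ k, 0 ≤ lfun v lam k y}

/-- Guillemin's canonical symplectic potential `u_G = Σ l_k log l_k`
(note `Real.log 0 = 0`, so `t log t = 0` at `t = 0`). -/
def uG {n d : ℕ} (v : Fin d → E n) (lam : Fin d → ℝ) (y : E n) : ℝ :=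
  ∑ k, lfun v lam k y * Real.log (lfun v lam k y)

/-- The biconjugate (convex envelope) over `P`:
`g**(y) = sup {a(y) : a affine on ℝⁿ, a ≤ g on P}`. -/
def biconj {n : ℕ} (P : Set (E n)) (g : E n → ℝ) (y : E n) : ℝ :=
  sSup {r : ℝ | ∃ (a : E n →L[ℝ] ℝ) (c : ℝ), (∀ z ∈ P, a z + c ≤ g z) ∧ r = a y + c}

/-- The subdifferential of `g : P → ℝ` at `y`, relative to `P`. -/
def subdiff {n : ℕ} (P : Set (E n)) (g : E n → ℝ) (y : E n) : Set (E n) :=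
  {w | ∀ z ∈ P, g y + ⟪w, z - y⟫ ≤ g z}

/-- The subdifferential of a finite (convex) function on all of ℝⁿ. -/
def subdiffR {n : ℕ} (f : E n → ℝ) (x : E n) : Set (E n) :=
  {w | ∀ z, f x + ⟪w, z - x⟫ ≤ f z}

/-- The total subdifferential of `ψ(s,x)` at `(s,x)`, a subset of `ℝ × ℝⁿ = ℝ^{n+1}`. -/
def subdiffT {n : ℕ} (ψ : ℝ → E n → ℝ) (s : ℝ) (x : E n) : Set (ℝ × E n) :=
  {w | ∀ t z, ψ s x + w.1 * (t - s) + ⟪w.2, z - x⟫ ≤ ψ t z}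

/-- The set of reachable partial `x`-subgradients `γ_x ψ(s,x)`. -/
def reachable {n : ℕ} (ψ : ℝ → E n → ℝ) (s : ℝ) (x : E n) : Set (E n) :=
  {w | ∃ xk : ℕ → E n, (∀ k, DifferentiableAt ℝ (ψ s) (xk k)) ∧
    Tendsto xk atTop (𝓝 x) ∧
    Tendsto (fun k => gradient (ψ s) (xk k)) atTop (𝓝 w)}

/-- `P` is a compact Delzant polytope with nonempty interior, cut out by the `l_k`,
with all facets of dimension `n−1`, and every vertex lying on exactly `n` of the
hyperplanes `{l_k = 0}` with linearly independent normals. -/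
def GoodPolytope {n d : ℕ} (v : Fin d → E n) (lam : Fin d → ℝ) (P : Set (E n)) : Prop :=
  P = Pset v lam ∧ IsCompact P ∧ (interior P).Nonempty ∧
  (∀ k, Module.finrank ℝ (affineSpan ℝ (P ∩ {y | lfun v lam k y = 0})).direction = n - 1) ∧
  (∀ p ∈ Set.extremePoints ℝ P, ∃ K : Finset (Fin d), K.card = n ∧
    (∀ k, k ∈ K ↔ lfun v lam k p = 0) ∧ LinearIndependent ℝ (fun k : K => v ↑k))

/-- The Cauchy data: `u₀ − u_G` extends smoothly to a neighborhood of `P`, `u₀` is convex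
on `P`, smooth with positive definite Hessian on `int P`; `u̇₀` extends smoothly to a
neighborhood of `P`. -/
def GoodData {n d : ℕ} (v : Fin d → E n) (lam : Fin d → ℝ) (P : Set (E n))
    (u₀ udot : E n → ℝ) : Prop :=
  (∃ U : Set (E n), IsOpen U ∧ P ⊆ U ∧ ∃ F : E n → ℝ, ContDiffOn ℝ (⊤ : ℕ∞) F U ∧
    ∀ y ∈ P, u₀ y = uG v lam y + F y) ∧
  ConvexOn ℝ P u₀ ∧
  ContDiffOn ℝ (⊤ : ℕ∞) u₀ (interior P) ∧
  (∀ y ∈ interior P, ∀ w : E n, w ≠ 0 → 0 < ⟪(fderiv ℝ (gradient u₀) y) w, w⟫) ∧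
  (∃ U : Set (E n), IsOpen U ∧ P ⊆ U ∧ ContDiffOn ℝ (⊤ : ℕ∞) udot U)

/-!
For every `w`, the function `u_s - ⟪w, ·⟫ = u_G + (smooth)` attains its minimum over the compact
polytope `P` in the interior: along the segment `y + t (z - y)` from a boundary point `y` to
`z ∈ int P`, each facet `l_k = 0` through `y` contributes `l_k(z) t log t`, and some `l_k(z) > 0`,
so the slope at `t = 0` is `-∞`.
A minimiser has `w` as a subgradient, so there `u_s** = u_s`. Conversely, at an interior point
where `u_s** = u_s` the subdifferential is non-empty (a limit of almost supporting affine
minorants, bounded because a ball around the point lies in `P`) and, `u_s` being differentiable,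
equals `{∇u_s(y)}` by the first-order condition; squeezed between `u_s` and this tangent plane,
`u_s**` is differentiable at `y` with the same gradient.
-/

section Envelope

variable {n : ℕ} {P : Set (E n)} {g : E n → ℝ} {y w : E n}

theorem mem_subdiff_iff_isMinOn : w ∈ subdiff P g y ↔ IsMinOn (fun z => g z - ⟪w, z⟫) P y := by
  refine forall₂_congr fun z _ => ?_
  show _ ↔ g y - ⟪w, y⟫ ≤ g z - ⟪w, z⟫
  rw [inner_sub_right]
  constructor <;> intro h <;> linarith

theorem le_biconj_of_mem_subdiff (hw : w ∈ subdiff P g y) {z : E n} (hz : z ∈ P) :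
    g y + ⟪w, z - y⟫ ≤ biconj P g z := by
  refine le_csSup ⟨g z, ?_⟩ ⟨innerSL ℝ w, g y - ⟪w, y⟫, fun x hx => ?_, ?_⟩
  · rintro r ⟨a, c, ha, rfl⟩
    exact ha z hz
  · have := hw x hx
    rw [inner_sub_right] at this
    simp only [innerSL_apply_apply]
    linarith
  · simp only [innerSL_apply_apply, inner_sub_right]
    ring

theorem biconj_le (hg : BddBelow (g '' P)) (hy : y ∈ P) : biconj P g y ≤ g y := by
  obtain ⟨m, hm⟩ := hg
  refine csSup_le ⟨m, 0, m, fun z hz => ?_, by simp⟩ ?_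
  · simpa using hm (mem_image_of_mem g hz)
  · rintro r ⟨a, c, ha, rfl⟩
    exact ha y hy

theorem biconj_eq_of_mem_subdiff (hg : BddBelow (g '' P)) (hw : w ∈ subdiff P g y) (hy : y ∈ P) :
    biconj P g y = g y :=
  le_antisymm (biconj_le hg hy) (by simpa using le_biconj_of_mem_subdiff hw hy)

theorem eq_of_mem_subdiff {g' : E n} (hy : y ∈ interior P) (hg : HasGradientAt g g' y)
    (hw : w ∈ subdiff P g y) : w = g' := by
  have hmin : IsLocalMin (fun z => g z - ⟪w, z⟫) y :=
    (mem_subdiff_iff_isMinOn.1 hw).isLocalMin (mem_interior_iff_mem_nhds.1 hy)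
  have hderiv : HasFDerivAt (fun z => g z - ⟪w, z⟫)
      (InnerProductSpace.toDual ℝ (E n) (g' - w)) y := by
    rw [map_sub]
    exact (hasGradientAt_iff_hasFDerivAt.1 hg).sub (innerSL ℝ w).hasFDerivAt
  have := hmin.hasFDerivAt_eq_zero hderiv
  rw [LinearIsometryEquiv.map_eq_zero_iff, sub_eq_zero] at this
  exact this.symm

theorem exists_approx_mem_subdiff (hg : BddBelow (g '' P)) (hbc : biconj P g y = g y)
    {ε : ℝ} (hε : 0 < ε) : ∃ w : E n, ∀ z ∈ P, g y - ε + ⟪w, z - y⟫ ≤ g z := by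
  obtain ⟨m, hm⟩ := hg
  have hne :
      {r : ℝ | ∃ (a : E n →L[ℝ] ℝ) (c : ℝ), (∀ z ∈ P, a z + c ≤ g z) ∧ r = a y + c}.Nonempty :=
    ⟨_, 0, m, fun z hz => by simpa using hm (mem_image_of_mem g hz), rfl⟩
  obtain ⟨_, ⟨a, c, ha, rfl⟩, hlt⟩ := exists_lt_of_lt_csSup hne (show g y - ε < biconj P g y by
    rw [hbc]; linarith)
  refine ⟨(InnerProductSpace.toDual ℝ (E n)).symm a, fun z hz => ?_⟩
  rw [InnerProductSpace.toDual_symm_apply, map_sub]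
  linarith [ha z hz]

theorem mul_norm_le_of_approx_mem_subdiff {ρ ε M : ℝ} (hρ : 0 < ρ)
    (hball : Metric.closedBall y ρ ⊆ P) (hM : ∀ z ∈ P, g z ≤ M)
    (hw : ∀ z ∈ P, g y - ε + ⟪w, z - y⟫ ≤ g z) : ρ * ‖w‖ ≤ M - g y + ε := by
  obtain rfl | hw0 := eq_or_ne w 0
  · have hy := hball (Metric.mem_closedBall_self hρ.le)
    have := hw y hy
    simp only [sub_self, inner_zero_right, add_zero] at this
    simp only [norm_zero, mul_zero]
    linarith [hM y hy]
  set z := y + (ρ / ‖w‖) • w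
  have hz : z ∈ P := hball (by
    rw [Metric.mem_closedBall, dist_eq_norm, add_sub_cancel_left, norm_smul, Real.norm_eq_abs,
      abs_of_nonneg (by positivity), div_mul_cancel₀ _ (norm_ne_zero_iff.2 hw0)])
  have hinner : ⟪w, z - y⟫ = ρ * ‖w‖ := by
    rw [add_sub_cancel_left, real_inner_smul_right, real_inner_self_eq_norm_sq]
    field_simp
  linarith [hw z hz, hM z hz]

theorem nonempty_subdiff_of_biconj_eq (hbelow : BddBelow (g '' P)) (habove : BddAbove (g '' P))
    (hy : y ∈ interior P) (hbc : biconj P g y = g y) : (subdiff P g y).Nonempty := by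
  obtain ⟨ρ, hρ, hball⟩ := Metric.nhds_basis_closedBall.mem_iff.1 (mem_interior_iff_mem_nhds.1 hy)
  obtain ⟨M, hM⟩ := habove
  have hM' : ∀ z ∈ P, g z ≤ M := fun z hz => hM (mem_image_of_mem g hz)
  choose w hw using fun j : ℕ =>
    exists_approx_mem_subdiff hbelow hbc (Nat.one_div_pos_of_nat (n := j))
  have hbdd : ∀ j, w j ∈ Metric.closedBall 0 ((M - g y + 1) / ρ) := fun j => by
    rw [mem_closedBall_zero_iff, le_div_iff₀ hρ, mul_comm]
    have hnorm := mul_norm_le_of_approx_mem_subdiff hρ hball hM' (hw j)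
    have hε : 1 / ((j : ℝ) + 1) ≤ 1 :=
      div_le_one_of_le₀ (by linarith [j.cast_nonneg (α := ℝ)]) (by positivity)
    linarith
  obtain ⟨w₀, -, φ, hφ, hlim⟩ := tendsto_subseq_of_bounded Metric.isBounded_closedBall hbdd
  refine ⟨w₀, fun z hz => le_of_tendsto (x := atTop) ?_
    (Eventually.of_forall fun j => hw (φ j) z hz)⟩
  have hε : Tendsto (fun j : ℕ => 1 / ((φ j : ℝ) + 1)) atTop (𝓝 0) :=
    tendsto_one_div_add_atTop_nhds_zero_nat.comp hφ.tendsto_atTop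
  simpa using (hε.const_sub (g y)).add (hlim.inner tendsto_const_nhds)

theorem HasGradientAt.of_le_of_tangent_le {q : E n → ℝ} (hy : P ∈ 𝓝 y) (hg : HasGradientAt g w y)
    (hle : ∀ z ∈ P, q z ≤ g z) (heq : q y = g y) (htangent : ∀ z ∈ P, g y + ⟪w, z - y⟫ ≤ q z) :
    HasGradientAt q w y := by
  rw [hasGradientAt_iff_isLittleO] at hg ⊢
  refine (Asymptotics.isBigO_iff.2 ⟨1, ?_⟩).trans_isLittleO hg
  filter_upwards [hy] with z hz
  have h₁ := hle z hz
  have h₂ := htangent z hz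
  rw [one_mul, Real.norm_eq_abs, Real.norm_eq_abs, abs_of_nonneg (by linarith),
    abs_of_nonneg (by linarith)]
  linarith

theorem subdiff_eq_singleton_gradient (hbelow : BddBelow (g '' P)) (habove : BddAbove (g '' P))
    (hy : y ∈ interior P) (hg : DifferentiableAt ℝ g y) (hbc : biconj P g y = g y) :
    subdiff P g y = {gradient g y} := by
  obtain ⟨w, hw⟩ := nonempty_subdiff_of_biconj_eq hbelow habove hy hbc
  have huniq : ∀ w' ∈ subdiff P g y, w' = gradient g y := fun w' hw' =>
    eq_of_mem_subdiff hy hg.hasGradientAt hw'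
  exact eq_singleton_iff_unique_mem.2 ⟨huniq w hw ▸ hw, huniq⟩

theorem hasGradientAt_biconj (hbelow : BddBelow (g '' P)) (hy : y ∈ interior P)
    (hg : HasGradientAt g w y) (hw : w ∈ subdiff P g y) : HasGradientAt (biconj P g) w y :=
  hg.of_le_of_tangent_le (mem_interior_iff_mem_nhds.1 hy) (fun _ hz => biconj_le hbelow hz)
    (biconj_eq_of_mem_subdiff hbelow hw (interior_subset hy))
    (fun _ hz => le_biconj_of_mem_subdiff hw hz)

theorem gradient_biconj_eq_gradient (hbelow : BddBelow (g '' P)) (habove : BddAbove (g '' P))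
    (hy : y ∈ interior P) (hg : DifferentiableAt ℝ g y) (hbc : biconj P g y = g y) :
    gradient (biconj P g) y = gradient g y :=
  (hasGradientAt_biconj hbelow hy hg.hasGradientAt
    (subdiff_eq_singleton_gradient hbelow habove hy hg hbc ▸ mem_singleton _)).gradient

end Envelope

theorem Real.mul_log_mul_of_pos {t : ℝ} (ht : 0 < t) (b : ℝ) :
    t * b * Real.log (t * b) = b * (t * Real.log t) + t * (b * Real.log b) := by
  rcases eq_or_ne b 0 with rfl | hb
  · simp
  · rw [Real.log_mul ht.ne' hb]
    ring

theorem eventually_mul_mul_log_add_lt {C : ℝ} {R : ℝ → ℝ} (hC : 0 < C)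
    (hR : DifferentiableAt ℝ R 0) : ∀ᶠ t in 𝓝[>] 0, C * (t * Real.log t) + R t < R 0 := by
  have hslope : Tendsto (fun t => C * Real.log t + t⁻¹ • (R (0 + t) - R 0)) (𝓝[>] 0) atBot :=
    (Real.tendsto_log_nhdsGT_zero.const_mul_atBot hC).atBot_add
      hR.hasDerivAt.tendsto_slope_zero_right
  filter_upwards [hslope.eventually (eventually_lt_atBot 0), self_mem_nhdsWithin]
    with t ht (htpos : 0 < t)
  rw [zero_add, smul_eq_mul] at ht
  have : C * (t * Real.log t) + R t - R 0 = t * (C * Real.log t + t⁻¹ * (R t - R 0)) := by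
    field_simp
    ring
  linarith [mul_neg_of_pos_of_neg htpos ht]

section Polytope

variable {n d : ℕ} {v : Fin d → E n} {lam : Fin d → ℝ}

theorem continuous_lfun (k : Fin d) : Continuous (lfun v lam k) := by
  unfold lfun
  fun_prop

theorem continuous_uG : Continuous (uG v lam) :=
  continuous_finsetSum _ fun k _ => Real.continuous_mul_log.comp (continuous_lfun k)

theorem lfun_add_smul_sub (k : Fin d) (y z : E n) (t : ℝ) :
    lfun v lam k (y + t • (z - y)) = lfun v lam k y + t * (lfun v lam k z - lfun v lam k y) := by
  simp only [lfun, inner_add_left, inner_sub_left, real_inner_smul_left]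
  ring

theorem convex_Pset : Convex ℝ (Pset v lam) := by
  refine convex_iff_forall_pos.2 fun x hx y hy a b _ _ hab k => ?_
  obtain rfl : a = 1 - b := by linarith
  have : (1 - b) • x + b • y = x + b • (y - x) := by module
  rw [this, lfun_add_smul_sub]
  nlinarith [hx k, hy k]

theorem hasGradientAt_lfun (k : Fin d) (y : E n) : HasGradientAt (lfun v lam k) (v k) y := by
  have h : lfun v lam k = fun x => innerSL ℝ (v k) x - lam k := by
    ext x
    simp [lfun, real_inner_comm]
  rw [hasGradientAt_iff_hasFDerivAt, h]
  exact ((innerSL ℝ (v k)).hasFDerivAt).sub_const (lam k)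

theorem lfun_eq_zero_of_mem_interior {z : E n} (hz : z ∈ interior (Pset v lam)) {k : Fin d}
    (hk : lfun v lam k z = 0) (x : E n) : lfun v lam k x = 0 := by
  have h0 : (0 : E n) ∈ subdiff (Pset v lam) (lfun v lam k) z := fun x hx => by
    simpa [hk] using hx k
  have hv : v k = 0 := (eq_of_mem_subdiff hz (hasGradientAt_lfun k z) h0).symm
  simpa [lfun, hv] using hk

theorem exists_lfun_eq_zero_and_pos {y z : E n} (hy : y ∈ Pset v lam)
    (hy' : y ∉ interior (Pset v lam)) (hz : z ∈ interior (Pset v lam)) :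
    ∃ k, lfun v lam k y = 0 ∧ 0 < lfun v lam k z := by
  by_contra! h
  refine hy' (mem_interior_iff_mem_nhds.2 ?_)
  have hpos : ∀ᶠ x in 𝓝 y, ∀ k, 0 < lfun v lam k y → 0 < lfun v lam k x :=
    eventually_all.2 fun k => eventually_imp_distrib_left.2 fun hk =>
      (continuous_lfun k).continuousAt.eventually (lt_mem_nhds hk)
  filter_upwards [hpos] with x hx k
  rcases (hy k).lt_or_eq with hk | hk
  · exact (hx k hk).le
  · rw [lfun_eq_zero_of_mem_interior hz (le_antisymm (h k hk.symm) (interior_subset hz k)) x]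

theorem exists_lt_uG_add_of_notMem_interior {G : E n → ℝ} {y z : E n} (hy : y ∈ Pset v lam)
    (hy' : y ∉ interior (Pset v lam)) (hz : z ∈ interior (Pset v lam))
    (hG : DifferentiableAt ℝ G y) : ∃ x ∈ Pset v lam, uG v lam x + G x < uG v lam y + G y := by
  classical
  obtain ⟨k₀, hk₀y, hk₀z⟩ := exists_lfun_eq_zero_and_pos hy hy' hz
  set l := lfun v lam
  set K := Finset.univ.filter fun k => l k y = 0
  have hC : 0 < ∑ k ∈ K, l k z :=
    Finset.sum_pos' (fun k _ => interior_subset hz k) ⟨k₀, by simp [K, hk₀y], hk₀z⟩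
  have huG : ∀ x, uG v lam x =
      ∑ k ∈ K, l k x * Real.log (l k x) + ∑ k ∈ Kᶜ, l k x * Real.log (l k x) := fun x =>
    (Finset.sum_add_sum_compl K _).symm
  -- facets through `y` contribute `l_k(z) t log t`, the other terms are differentiable at `t = 0`
  set R : ℝ → ℝ := fun t => ∑ k ∈ Kᶜ, l k (y + t • (z - y)) * Real.log (l k (y + t • (z - y)))
    + t * ∑ k ∈ K, l k z * Real.log (l k z) + G (y + t • (z - y))
  have hR : DifferentiableAt ℝ R 0 := by
    have hl : ∀ k, DifferentiableAt ℝ (fun t : ℝ => l k (y + t • (z - y))) 0 := fun k => by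
      simp only [l, lfun_add_smul_sub]
      fun_prop
    refine (DifferentiableAt.fun_sum fun k hk => (hl k).mul ((hl k).log ?_)).add
      (by fun_prop) |>.add (DifferentiableAt.comp (0 : ℝ) (by simpa using hG) (by fun_prop))
    simpa [K] using hk
  have hR0 : R 0 = uG v lam y + G y := by
    have hK : ∑ k ∈ K, l k y * Real.log (l k y) = 0 :=
      Finset.sum_eq_zero fun k hk => by simp [(Finset.mem_filter.1 hk).2]
    simp only [R, huG, hK, zero_smul, add_zero, zero_mul, zero_add]
  have hsplit : ∀ t > 0, uG v lam (y + t • (z - y)) + G (y + t • (z - y)) =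
      (∑ k ∈ K, l k z) * (t * Real.log t) + R t := by
    intro t ht
    have hK : ∀ k ∈ K, l k (y + t • (z - y)) * Real.log (l k (y + t • (z - y))) =
        l k z * (t * Real.log t) + t * (l k z * Real.log (l k z)) := fun k hk => by
      rw [show l k (y + t • (z - y)) = t * l k z by
        simp [l, lfun_add_smul_sub, (Finset.mem_filter.1 hk).2]]
      exact Real.mul_log_mul_of_pos ht _
    rw [huG, Finset.sum_congr rfl hK, Finset.sum_add_distrib, ← Finset.sum_mul, ← Finset.mul_sum]
    ring
  obtain ⟨t, hlt, ht⟩ := ((eventually_mul_mul_log_add_lt hC hR).and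
    (Ioc_mem_nhdsGT one_pos)).exists
  refine ⟨y + t • (z - y), convex_Pset.add_smul_sub_mem hy (interior_subset hz)
    (Ioc_subset_Icc_self ht), ?_⟩
  rwa [hsplit t ht.1, ← hR0]

theorem continuousOn_uG_add {G : E n → ℝ} (hG : ∀ y ∈ Pset v lam, DifferentiableAt ℝ G y) :
    ContinuousOn (uG v lam + G) (Pset v lam) :=
  continuous_uG.continuousOn.add fun y hy => (hG y hy).continuousAt.continuousWithinAt

theorem exists_mem_interior_isMinOn_uG_add {G : E n → ℝ} (hc : IsCompact (Pset v lam))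
    (hne : (interior (Pset v lam)).Nonempty) (hG : ∀ y ∈ Pset v lam, DifferentiableAt ℝ G y) :
    ∃ y ∈ interior (Pset v lam), IsMinOn (uG v lam + G) (Pset v lam) y := by
  obtain ⟨z, hz⟩ := hne
  obtain ⟨y, hy, hmin⟩ := hc.exists_isMinOn ⟨z, interior_subset hz⟩ (continuousOn_uG_add hG)
  refine ⟨y, by_contra fun hy' => ?_, hmin⟩
  obtain ⟨x, hx, hlt⟩ := exists_lt_uG_add_of_notMem_interior hy hy' hz (hG y hy)
  exact (hmin hx).not_gt hlt

theorem exists_mem_interior_mem_subdiff {g G : E n → ℝ} (hc : IsCompact (Pset v lam))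
    (hne : (interior (Pset v lam)).Nonempty) (hG : ∀ y ∈ Pset v lam, DifferentiableAt ℝ G y)
    (hg : EqOn g (uG v lam + G) (Pset v lam)) (w : E n) :
    ∃ y ∈ interior (Pset v lam), w ∈ subdiff (Pset v lam) g y := by
  obtain ⟨y, hy, hmin⟩ := exists_mem_interior_isMinOn_uG_add (G := fun x => G x - ⟪w, x⟫) hc hne
    fun x hx => (hG x hx).sub (innerSL ℝ w).differentiableAt
  refine ⟨y, hy, mem_subdiff_iff_isMinOn.2 fun x hx => ?_⟩
  have h : uG v lam y + (G y - ⟪w, y⟫) ≤ uG v lam x + (G x - ⟪w, x⟫) := hmin hx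
  show g y - ⟪w, y⟫ ≤ g x - ⟪w, x⟫
  rw [hg hx, hg (interior_subset hy), Pi.add_apply, Pi.add_apply]
  linarith

section GoodData

variable {P : Set (E n)} {u₀ udot : E n → ℝ}

theorem GoodData.exists_eqOn_uG_add (hD : GoodData v lam P u₀ udot) (s : ℝ) :
    ∃ G : E n → ℝ, (∀ y ∈ P, DifferentiableAt ℝ G y) ∧
      EqOn (fun y => u₀ y + s * udot y) (uG v lam + G) P := by
  obtain ⟨⟨U₁, hU₁, hPU₁, F, hF, hu₀F⟩, -, -, -, ⟨U₂, hU₂, hPU₂, hudot⟩⟩ := hD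
  refine ⟨F + s • udot, fun y hy => ?_, fun y hy => ?_⟩
  · exact ((hF.contDiffAt (hU₁.mem_nhds (hPU₁ hy))).differentiableAt (by simp)).add
      (((hudot.contDiffAt (hU₂.mem_nhds (hPU₂ hy))).differentiableAt (by simp)).const_smul s)
  · simp only [hu₀F y hy, Pi.add_apply, Pi.smul_apply, smul_eq_mul]
    ring

theorem GoodData.differentiableAt_add_mul (hD : GoodData v lam P u₀ udot) (s : ℝ) {y : E n}
    (hy : y ∈ interior P) : DifferentiableAt ℝ (fun y => u₀ y + s * udot y) y := by
  obtain ⟨-, -, hu₀, -, ⟨U, hU, hPU, hudot⟩⟩ := hD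
  exact ((hu₀.contDiffAt (isOpen_interior.mem_nhds hy)).differentiableAt (by simp)).add
    (((hudot.contDiffAt (hU.mem_nhds (hPU (interior_subset hy)))).differentiableAt
      (by simp)).const_mul s)

end GoodData

end Polytope

theorem gradient_biconj_surjective_general
    {n d : ℕ}
    (v : Fin d → E n) (lam : Fin d → ℝ) (P : Set (E n))
    (hP : GoodPolytope v lam P)
    (u₀ udot : E n → ℝ) (hD : GoodData v lam P u₀ udot)
    (u : ℝ → E n → ℝ) (hu : ∀ s y, u s y = u₀ y + s * udot y)
    (A : ℝ → Set (E n)) (hA : ∀ s, A s = {y ∈ P | u s y ≠ biconj P (u s) y}) :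
    ∀ s : ℝ, 0 < s →
      ((fun y => gradient (biconj P (u s)) y) '' interior P = univ ∧
        (⋃ y ∈ interior P, subdiff P (u s) y) = univ) ∧
      ((⋃ y ∈ (interior P) \ A s, subdiff P (u s) y) = univ ∧
        ∀ y ∈ (interior P) \ A s,
          subdiff P (u s) y = {gradient (u s) y} ∧
          gradient (biconj P (u s)) y = gradient (u s) y) := by
  intro s _
  have hus : u s = fun y => u₀ y + s * udot y := funext (hu s)
  obtain ⟨G, hG, hsplit⟩ := hD.exists_eqOn_uG_add s
  obtain ⟨rfl, hc, hne, -, -⟩ := hP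
  rw [← hus] at hsplit
  have hcont := (continuousOn_uG_add hG).congr hsplit
  have hbelow := hc.bddBelow_image hcont
  have habove := hc.bddAbove_image hcont
  have hnotA : ∀ y, y ∈ interior (Pset v lam) \ A s ↔
      y ∈ interior (Pset v lam) ∧ biconj (Pset v lam) (u s) y = u s y := fun y => by
    simp only [Set.mem_sdiff, hA, mem_ofPred_eq, not_and, not_not]
    exact ⟨fun h => ⟨h.1, (h.2 (interior_subset h.1)).symm⟩, fun h => ⟨h.1, fun _ => h.2.symm⟩⟩
  have hsurj : ∀ w, ∃ y ∈ interior (Pset v lam) \ A s, w ∈ subdiff (Pset v lam) (u s) y := by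
    intro w
    obtain ⟨y, hy, hw⟩ := exists_mem_interior_mem_subdiff hc hne hG hsplit w
    exact ⟨y, (hnotA y).2 ⟨hy, biconj_eq_of_mem_subdiff hbelow hw (interior_subset hy)⟩, hw⟩
  have hpt : ∀ y ∈ interior (Pset v lam) \ A s,
      subdiff (Pset v lam) (u s) y = {gradient (u s) y} ∧
        gradient (biconj (Pset v lam) (u s)) y = gradient (u s) y := fun y hy => by
    obtain ⟨hy, hbc⟩ := (hnotA y).1 hy
    have hd : DifferentiableAt ℝ (u s) y := hus ▸ hD.differentiableAt_add_mul s hy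
    exact ⟨subdiff_eq_singleton_gradient hbelow habove hy hd hbc,
      gradient_biconj_eq_gradient hbelow habove hy hd hbc⟩
  refine ⟨⟨eq_univ_of_forall fun w => ?_, eq_univ_of_forall fun w => ?_⟩,
    eq_univ_of_forall fun w => ?_, hpt⟩ <;> obtain ⟨y, hy, hw⟩ := hsurj w
  · obtain ⟨hsub, hgrad⟩ := hpt y hy
    rw [hsub] at hw
    exact ⟨y, hy.1, hgrad.trans hw.symm⟩
  · exact mem_biUnion hy.1 hw
  · exact mem_biUnion hy hw

/-- For each `s > 0`: (i) `∇u_s**(int P) = ⋃_{y ∈ int P} ∂u_s(y) = ℝⁿ`;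
(ii) `⋃_{y ∈ int P ∖ A_s} ∂u_s(y) = ℝⁿ`, and on `int P ∖ A_s` one has
`∂u_s(y) = {∇u_s(y)}` and `∇u_s**(y) = ∇u_s(y)`. -/
theorem gradient_biconj_surjective
    {n d : ℕ} (hn : 1 ≤ n)
    (v : Fin d → E n) (lam : Fin d → ℝ) (P : Set (E n))
    (hP : GoodPolytope v lam P)
    (u₀ udot : E n → ℝ) (hD : GoodData v lam P u₀ udot)
    (u : ℝ → E n → ℝ) (hu : ∀ s y, u s y = u₀ y + s * udot y)
    (A : ℝ → Set (E n)) (hA : ∀ s, A s = {y ∈ P | u s y ≠ biconj P (u s) y}) :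
    ∀ s : ℝ, 0 < s →
      ((fun y => gradient (biconj P (u s)) y) '' interior P = univ ∧
        (⋃ y ∈ interior P, subdiff P (u s) y) = univ) ∧
      ((⋃ y ∈ (interior P) \ A s, subdiff P (u s) y) = univ ∧
        ∀ y ∈ (interior P) \ A s,
          subdiff P (u s) y = {gradient (u s) y} ∧
          gradient (biconj P (u s)) y = gradient (u s) y) :=
  gradient_biconj_surjective_general v lam P hP u₀ udot hD u hu A hA
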